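/- arXiv:1604.04888 — 3 statements merged into one kernel-verified Lean document; each statement's English description precedes it below -/
import Mathlib

section
/- Let Ω ⊆ ℝ² be a bounded open set whose topological boundary ∂Ω has Lebesgue measure zero, and let g : ℝ² → ℂ be continuously differentiable with g(r) = 0 for every r ∈ ∂Ω. Then ∫_Ω ∂g/∂x_j(r) dr = 0 for j = 1, 2. -/
/-!
Extend `g` by zero outside `Ω`. Since a segment from a point of `Ω` to a point outside it
crosses `∂Ω`, where `g` vanishes, the extension `G` is Lipschitz; it has compact support, and
off the null set `∂Ω` it is differentiable with derivative `𝟙_Ω • Dg`. By translation invariance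
of Lebesgue measure, `t ↦ ∫ G (x + t • v) dx` is constant, and differentiating under the integral
sign (dominated by the Lipschitz constant) gives `∫ DG(x) v dx = 0`.
-/

open MeasureTheory Set Metric Filter

theorem IsPreconnected.inter_frontier_nonempty {X : Type*} [TopologicalSpace X] {s t : Set X}
    (hs : IsPreconnected s) (hst : (s ∩ t).Nonempty) (hst' : (s \ t).Nonempty) :
    (s ∩ frontier t).Nonempty := by
  by_contra h
  have hsub : s ⊆ interior t ∪ (closure t)ᶜ := fun x hx ↦ by
    by_cases hxt : x ∈ closure t
    · exact .inl (by by_contra hxi; exact h ⟨x, hx, hxt, hxi⟩)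
    · exact .inr hxt
  obtain ⟨a, ha, hat⟩ := hst
  obtain ⟨b, hb, hbt⟩ := hst'
  obtain ⟨x, -, hxi, hxc⟩ := hs _ _ isOpen_interior isClosed_closure.isOpen_compl hsub
    ⟨a, ha, (hsub ha).resolve_right (· (subset_closure hat))⟩
    ⟨b, hb, (hsub hb).resolve_left (hbt <| interior_subset ·)⟩
  exact hxc (subset_closure (interior_subset hxi))

variable {E F : Type*} [NormedAddCommGroup E] [NormedSpace ℝ E] [NormedAddCommGroup F]

theorem LipschitzOnWith.lipschitzWith_indicator {s : Set E} {f : E → F} {K : NNReal}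
    (hf : LipschitzOnWith K f (closure s)) (hf₀ : ∀ x ∈ frontier s, f x = 0) :
    LipschitzWith K (s.indicator f) := by
  have hacross : ∀ x ∈ s, ∀ y ∉ s, dist (f x) 0 ≤ K * dist x y := fun x hx y hy ↦ by
    obtain ⟨z, hz, hzs⟩ := (convex_segment x y).isPreconnected.inter_frontier_nonempty
      ⟨x, left_mem_segment ℝ x y, hx⟩ ⟨y, right_mem_segment ℝ x y, hy⟩
    calc dist (f x) 0 = dist (f x) (f z) := by rw [hf₀ z hzs]
      _ ≤ K * dist x z := hf.dist_le_mul x (subset_closure hx) z (frontier_subset_closure hzs)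
      _ ≤ K * dist x y := by
        gcongr
        linarith [dist_add_dist_of_mem_segment hz, dist_nonneg (x := z) (y := y)]
  refine LipschitzWith.of_dist_le_mul fun x y ↦ ?_
  by_cases hx : x ∈ s <;> by_cases hy : y ∈ s
  · simpa [hx, hy] using hf.dist_le_mul x (subset_closure hx) y (subset_closure hy)
  · simpa [hx, hy] using hacross x hx y hy
  · simpa [hx, hy, dist_comm] using hacross y hy x hx
  · simp only [indicator_of_notMem hx, indicator_of_notMem hy, dist_self]
    positivity

theorem hasFDerivAt_indicator_of_notMem_frontier [NormedSpace ℝ F] {s : Set E} {f : E → F}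
    {a : E} (ha : a ∉ frontier s) (hf : DifferentiableAt ℝ f a) :
    HasFDerivAt (s.indicator f) (s.indicator (fderiv ℝ f) a) a := by
  by_cases has : a ∈ s
  · have hint : a ∈ interior s := by
      by_contra h; exact ha ⟨subset_closure has, h⟩
    rw [indicator_of_mem has]
    exact hf.hasFDerivAt.congr_of_eventuallyEq <|
      eventually_of_mem (mem_interior_iff_mem_nhds.1 hint) fun x hx ↦ indicator_of_mem hx f
  · have hcl : a ∉ closure s := fun h ↦ ha ⟨h, fun h' ↦ has (interior_subset h')⟩
    rw [indicator_of_notMem has]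
    exact (hasFDerivAt_const 0 a).congr_of_eventuallyEq <|
      eventually_of_mem (isClosed_closure.isOpen_compl.mem_nhds hcl) fun x hx ↦
        indicator_of_notMem (fun h ↦ hx (subset_closure h)) f

theorem LipschitzWith.lipschitzOnWith_comp_add_smul {f : E → F} {C : NNReal}
    (hf : LipschitzWith C f) (x v : E) :
    LipschitzOnWith (Real.nnabs ((cthickening ‖v‖ (tsupport f)).indicator (fun _ ↦ C * ‖v‖) x))
      (fun t : ℝ ↦ f (x + t • v)) (ball 0 1) := by
  by_cases hx : x ∈ cthickening ‖v‖ (tsupport f)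
  · rw [indicator_of_mem hx]
    have hline : LipschitzWith ‖v‖₊ (fun t : ℝ ↦ x + t • v) := by
      refine LipschitzWith.of_dist_le_mul fun s t ↦ ?_
      simp [dist_eq_norm, ← sub_smul, norm_smul, mul_comm]
    convert (hf.comp hline).lipschitzOnWith using 1
    · ext; simp
    · rfl
  · rw [indicator_of_notMem hx, Real.nnabs.map_zero]
    have hzero : ∀ t ∈ ball (0 : ℝ) 1, f (x + t • v) = 0 := fun t ht ↦ by
      refine image_eq_zero_of_notMem_tsupport fun hxt ↦ hx ?_
      refine mem_cthickening_of_dist_le x _ _ _ hxt ?_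
      rw [mem_ball_zero_iff, Real.norm_eq_abs] at ht
      simpa [dist_eq_norm, norm_smul] using mul_le_of_le_one_left (norm_nonneg v) ht.le
    intro s hs t ht
    simp [hzero s hs, hzero t ht]

variable [FiniteDimensional ℝ E] [MeasurableSpace E] [BorelSpace E] [NormedSpace ℝ F]
  [FiniteDimensional ℝ F]

theorem LipschitzWith.integral_fderiv_apply_eq_zero {μ : Measure E} [μ.IsAddHaarMeasure]
    {f : E → F} {C : NNReal} (hf : LipschitzWith C f) (h'f : HasCompactSupport f) (v : E) :
    ∫ x, fderiv ℝ f x v ∂μ = 0 := by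
  borelize F
  have hK : IsCompact (cthickening ‖v‖ (tsupport f)) := h'f.cthickening
  have hderiv := (hasDerivAt_integral_of_dominated_loc_of_lip (μ := μ)
    (F := fun t x ↦ f (x + t • v)) (ball_mem_nhds 0 one_pos)
    (.of_forall fun t ↦ (hf.continuous.comp (continuous_add_const _)).aestronglyMeasurable)
    (by simpa using hf.continuous.integrable_of_hasCompactSupport h'f)
    (measurable_fderiv_apply_const ℝ f v).aestronglyMeasurable
    (.of_forall (hf.lipschitzOnWith_comp_add_smul · v))
    ((integrable_indicator_iff hK.measurableSet).2 (integrableOn_const hK.measure_lt_top.ne))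
    (hf.ae_differentiableAt.mono fun x hx ↦ ?_)).2
  · have hconst : (fun t : ℝ ↦ ∫ x, f (x + t • v) ∂μ) = fun _ ↦ ∫ x, f x ∂μ :=
      funext fun t ↦ integral_add_right_eq_self f (t • v)
    rw [hconst] at hderiv
    exact hderiv.unique (hasDerivAt_const 0 _)
  · have hline : HasDerivAt (fun t : ℝ ↦ x + t • v) v 0 := by
      simpa using ((hasDerivAt_id (0 : ℝ)).smul_const v).const_add x
    have hfx : HasFDerivAt f (fderiv ℝ f x) (x + (0 : ℝ) • v) := by simpa using hx.hasFDerivAt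
    exact hfx.comp_hasDerivAt 0 hline

theorem integral_partial_deriv_eq_zero_general
    (Ω : Set (ℝ × ℝ)) (hΩbdd : Bornology.IsBounded Ω)
    (hΩnull : volume (frontier Ω) = 0)
    (g : ℝ × ℝ → ℂ) (hg : ContDiff ℝ 1 g)
    (hgz : ∀ r ∈ frontier Ω, g r = 0) :
    ∀ j : Fin 2,
      (∫ r in Ω, fderiv ℝ g r (if j = 0 then ((1 : ℝ), (0 : ℝ)) else ((0 : ℝ), (1 : ℝ)))) = 0 := by
  intro j
  set e : ℝ × ℝ := if j = 0 then (1, 0) else (0, 1)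
  obtain ⟨C, hC⟩ := hg.locallyLipschitz.locallyLipschitzOn.exists_lipschitzOnWith_of_compact
    hΩbdd.isCompact_closure
  have hsupp : HasCompactSupport (Ω.indicator g) :=
    HasCompactSupport.intro hΩbdd.isCompact_closure fun x hx ↦
      indicator_of_notMem (fun h ↦ hx (subset_closure h)) g
  have hderiv : ∀ᵐ r, fderiv ℝ (Ω.indicator g) r e = Ω.indicator (fun r ↦ fderiv ℝ g r e) r := by
    filter_upwards [measure_eq_zero_iff_ae_notMem.1 hΩnull] with r hr
    rw [(hasFDerivAt_indicator_of_notMem_frontier hr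
      ((hg.differentiable one_ne_zero) r)).fderiv]
    by_cases hrΩ : r ∈ Ω <;> simp [hrΩ]
  calc ∫ r in Ω, fderiv ℝ g r e
      = ∫ r, Ω.indicator (fun r ↦ fderiv ℝ g r e) r :=
        (integral_indicator₀ (nullMeasurableSet_of_null_frontier hΩnull)).symm
    _ = ∫ r, fderiv ℝ (Ω.indicator g) r e := integral_congr_ae (hderiv.mono fun r h ↦ h.symm)
    _ = 0 := (hC.lipschitzWith_indicator hgz).integral_fderiv_apply_eq_zero hsupp e

/-- If `Ω ⊆ ℝ²` is a bounded open set whose topological boundary has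
Lebesgue measure zero, and `g : ℝ² → ℂ` is continuously differentiable with `g = 0`
on `∂Ω`, then the integral of each partial derivative of `g` over `Ω` vanishes. -/
theorem integral_partial_deriv_eq_zero
    (Ω : Set (ℝ × ℝ)) (hΩopen : IsOpen Ω) (hΩbdd : Bornology.IsBounded Ω)
    (hΩnull : volume (frontier Ω) = 0)
    (g : ℝ × ℝ → ℂ) (hg : ContDiff ℝ 1 g)
    (hgz : ∀ r ∈ frontier Ω, g r = 0) :
    ∀ j : Fin 2,
      (∫ r in Ω, fderiv ℝ g r (if j = 0 then ((1 : ℝ), (0 : ℝ)) else ((0 : ℝ), (1 : ℝ)))) = 0 :=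
  integral_partial_deriv_eq_zero_general Ω hΩbdd hΩnull g hg hgz
end

section
/- For every ℓ ∈ ℤ² and every j ∈ {1, 2}, it holds that Σ_{k∈Λ0} c[k] · (ℓ − k)_j · f̂[ℓ − k] = 0, where (ℓ − k)_j denotes the j-th coordinate of ℓ − k ∈ ℤ². -/
open MeasureTheory

noncomputable section

/-- The complex exponential `e^{2πi k·r}` for `k ∈ ℤ²`, `r ∈ ℝ²`. -/
def efun (k : ℤ × ℤ) (r : ℝ × ℝ) : ℂ :=
  Complex.exp (2 * Real.pi * Complex.I * ((k.1 : ℝ) * r.1 + (k.2 : ℝ) * r.2 : ℝ))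

/-- The unit square `[0,1]²`. -/
def square : Set (ℝ × ℝ) := Set.Icc (0, 0) (1, 1)

/-- Fourier coefficients `f̂[k] = ∫_{[0,1]²} f(r) e^{−2πi k·r} dr`. -/
def fourierCoeff2 (f : ℝ × ℝ → ℂ) (k : ℤ × ℤ) : ℂ :=
  ∫ r in square, f r * efun (-k) r

/-!
Put `G(r) = μ0(r) e^{−2πi ℓ·r} = Σ_k c[k] e^{2πi (k−ℓ)·r}`, which vanishes on every `∂Ωᵢ`.
The integral of `∂₁G` over an open bounded `Ω` is zero: by Fubini it is an integral of slice
integrals, each slice `{x | (x, y) ∈ Ω}` is a countable disjoint union of open intervals whose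
endpoints lie in `∂Ω`, and on each interval the fundamental theorem of calculus applies.
Since `∂₁G = 2πi Σ_k c[k] (k−ℓ)₁ e^{2πi (k−ℓ)·r}` and `∫_{Ωᵢ} e^{2πi (k−ℓ)·r} dr = χ̂_{Ωᵢ}[ℓ−k]`,
this is the relation for each `χ_{Ωᵢ}`, and it passes to `f` by linearity. The second
coordinate follows from the first by exchanging the coordinates.
-/

open Set

theorem IsOpen.frontier_connectedComponentIn_subset {X : Type*} [TopologicalSpace X]
    [LocallyConnectedSpace X] {U : Set X} (hU : IsOpen U) (x : X) :
    frontier (connectedComponentIn U x) ⊆ frontier U := by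
  intro y hy
  refine ⟨closure_mono (connectedComponentIn_subset U x) hy.1, fun hyU => ?_⟩
  rw [interior_eq_iff_isOpen.2 hU] at hyU
  obtain ⟨z, hzy, hzx⟩ := mem_closure_iff.1 hy.1 _ hU.connectedComponentIn
    (mem_connectedComponentIn hyU)
  rw [hU.connectedComponentIn.frontier_eq, connectedComponentIn_eq hzx,
    ← connectedComponentIn_eq hzy] at hy
  exact hy.2 (mem_connectedComponentIn hyU)

theorem IsOpen.eq_Ioo_csInf_csSup {α : Type*} [ConditionallyCompleteLinearOrder α]
    [TopologicalSpace α] [OrderTopology α] [DenselyOrdered α] [NoMinOrder α] [NoMaxOrder α]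
    {C : Set α} (hC : IsOpen C) (hpc : IsPreconnected C) (hne : C.Nonempty)
    (hbb : BddBelow C) (hba : BddAbove C) :
    C = Ioo (sInf C) (sSup C) := by
  refine Subset.antisymm (fun x hx => ⟨?_, ?_⟩)
    (IsConnected.Ioo_csInf_csSup_subset ⟨hne, hpc⟩ hbb hba)
  · obtain ⟨y, hyx, hy⟩ := (hC.eventually_mem hx).exists_lt
    exact (csInf_le hbb hy).trans_lt hyx
  · obtain ⟨y, hxy, hy⟩ := (hC.eventually_mem hx).exists_gt
    exact hxy.trans_le (le_csSup hba hy)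

theorem IsOpen.setIntegral_eq_zero_of_connectedComponentIn {X E : Type*} [TopologicalSpace X]
    [LocallyConnectedSpace X] [TopologicalSpace.SeparableSpace X] [MeasurableSpace X]
    [OpensMeasurableSpace X] [NormedAddCommGroup E] [NormedSpace ℝ E] {μ : Measure X}
    {U : Set X} (hU : IsOpen U) {f : X → E} (hf : IntegrableOn f U μ)
    (h : ∀ x ∈ U, ∫ t in connectedComponentIn U x, f t ∂μ = 0) : ∫ t in U, f t ∂μ = 0 := by
  set T : Set (Set X) := connectedComponentIn U '' U
  have hdisj : T.PairwiseDisjoint id := by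
    rintro _ ⟨y, -, rfl⟩ _ ⟨z, -, rfl⟩ hne
    refine disjoint_left.2 fun w hwy hwz => hne ?_
    rw [connectedComponentIn_eq hwy, connectedComponentIn_eq hwz]
  have hT : T.Countable := hdisj.countable_of_isOpen
    (by rintro _ ⟨y, -, rfl⟩; exact hU.connectedComponentIn)
    (by rintro _ ⟨y, hy, rfl⟩; exact ⟨y, mem_connectedComponentIn hy⟩)
  have hUT : ⋃ C : T, (C : Set X) = U := by
    rw [iUnion_coe_set, biUnion_image]
    exact Subset.antisymm (iUnion₂_subset fun x _ => connectedComponentIn_subset U x)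
      fun x hx => mem_iUnion₂_of_mem hx (mem_connectedComponentIn hx)
  have : Countable T := hT.to_subtype
  rw [← hUT, integral_iUnion (s := fun C : T => (C : Set X))
    (fun C => ?_) (fun C D hCD => hdisj C.2 D.2 (Subtype.coe_ne_coe.2 hCD)) (hUT ▸ hf)]
  · refine (tsum_congr fun C => ?_).trans tsum_zero
    obtain ⟨_, ⟨x, hx, rfl⟩⟩ := C
    exact h x hx
  · obtain ⟨_, ⟨x, -, rfl⟩⟩ := C
    exact hU.connectedComponentIn.measurableSet

theorem Continuous.integrableOn_of_isBounded {X E : Type*} [MetricSpace X] [ProperSpace X]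
    [MeasurableSpace X] [OpensMeasurableSpace X] {μ : Measure X} [IsFiniteMeasureOnCompacts μ]
    [NormedAddCommGroup E] {f : X → E} (hf : Continuous f) {s : Set X}
    (hs : Bornology.IsBounded s) : IntegrableOn f s μ :=
  (hf.continuousOn.integrableOn_compact hs.isCompact_closure).mono_set subset_closure

theorem IsOpen.setIntegral_deriv_eq_zero {E : Type*} [NormedAddCommGroup E] [NormedSpace ℝ E]
    [CompleteSpace E] {U : Set ℝ} (hU : IsOpen U) (hb : Bornology.IsBounded U) {g g' : ℝ → E}
    (hd : ∀ x, HasDerivAt g (g' x) x) (hc : Continuous g') (hfr : ∀ x ∈ frontier U, g x = 0) :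
    ∫ x in U, g' x = 0 := by
  refine hU.setIntegral_eq_zero_of_connectedComponentIn (hc.integrableOn_of_isBounded hb)
    fun x hx => ?_
  have hxC := mem_connectedComponentIn hx
  have hCb := hb.subset (connectedComponentIn_subset U x)
  obtain ⟨a, b, hC⟩ : ∃ a b, connectedComponentIn U x = Ioo a b :=
    ⟨_, _, hU.connectedComponentIn.eq_Ioo_csInf_csSup isPreconnected_connectedComponentIn
      ⟨x, hxC⟩ hCb.bddBelow hCb.bddAbove⟩
  have hab : a < b := nonempty_Ioo.1 (hC ▸ ⟨x, hxC⟩)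
  have hends : frontier (Ioo a b) ⊆ frontier U :=
    hC ▸ hU.frontier_connectedComponentIn_subset x
  rw [frontier_Ioo hab] at hends
  rw [hC, ← integral_Ioc_eq_integral_Ioo, ← intervalIntegral.integral_of_le hab.le,
    intervalIntegral.integral_eq_sub_of_hasDerivAt (fun t _ => hd t) (hc.intervalIntegrable a b),
    hfr a (hends (by simp)), hfr b (hends (by simp)), sub_zero]

theorem IsOpen.setIntegral_partialDeriv_fst_eq_zero {E : Type*} [NormedAddCommGroup E]
    [NormedSpace ℝ E] [CompleteSpace E] {Ω : Set (ℝ × ℝ)} (hΩ : IsOpen Ω)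
    (hb : Bornology.IsBounded Ω) {G G' : ℝ × ℝ → E}
    (hd : ∀ x y, HasDerivAt (fun t => G (t, y)) (G' (x, y)) x) (hc : Continuous G')
    (hfr : ∀ r ∈ frontier Ω, G r = 0) :
    ∫ r in Ω, G' r = 0 := by
  have hslice : ∀ y, ∫ x, Ω.indicator G' (x, y) = 0 := by
    intro y
    have hy : Continuous fun x : ℝ => (x, y) := by fun_prop
    simp_rw [← indicator_comp_right (fun x : ℝ => (x, y))]
    rw [integral_indicator (hΩ.preimage hy).measurableSet]
    refine (hΩ.preimage hy).setIntegral_deriv_eq_zero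
      (hb.image_fst.subset fun x hx => ⟨_, hx, rfl⟩) (hd · y) (hc.comp hy) fun x hx => ?_
    exact hfr _ (hy.frontier_preimage_subset Ω hx)
  rw [← integral_indicator hΩ.measurableSet, Measure.volume_eq_prod,
    integral_prod_symm _ ((hc.integrableOn_of_isBounded hb).integrable_indicator hΩ.measurableSet)]
  simp [hslice]

@[fun_prop]
theorem continuous_efun (k : ℤ × ℤ) : Continuous (efun k) := by
  unfold efun
  fun_prop

theorem efun_add (k m : ℤ × ℤ) (r : ℝ × ℝ) : efun (k + m) r = efun k r * efun m r := by
  simp only [efun, ← Complex.exp_add, Prod.fst_add, Prod.snd_add]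
  push_cast
  ring_nf

theorem efun_swap (k : ℤ × ℤ) (r : ℝ × ℝ) : efun k.swap r = efun k r.swap := by
  simp only [efun, Prod.fst_swap, Prod.snd_swap, add_comm]

theorem hasDerivAt_efun_fst (k : ℤ × ℤ) (x y : ℝ) :
    HasDerivAt (fun t => efun k (t, y)) (2 * Real.pi * Complex.I * k.1 * efun k (x, y)) x := by
  refine ((((hasDerivAt_id x).const_mul (k.1 : ℝ)).add_const ((k.2 : ℝ) * y)).ofReal_comp.const_mul
    (2 * Real.pi * Complex.I)).cexp.congr_deriv ?_
  simp only [efun, id, mul_one]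
  push_cast
  ring

open Complex Real in
theorem sum_mul_fst_mul_setIntegral_efun_eq_zero {Ω : Set (ℝ × ℝ)} (hΩ : IsOpen Ω)
    (hb : Bornology.IsBounded Ω) (Λ0 : Finset (ℤ × ℤ)) (c : ℤ × ℤ → ℂ) (ℓ : ℤ × ℤ)
    (hμ : ∀ r ∈ frontier Ω, ∑ k ∈ Λ0, c k * efun k r = 0) :
    ∑ k ∈ Λ0, c k * ((ℓ - k).1 : ℂ) * ∫ r in Ω, efun (k - ℓ) r = 0 := by
  have hG : ∫ r in Ω, ∑ k ∈ Λ0, c k * (2 * π * I * (k - ℓ).1 * efun (k - ℓ) r) = 0 := by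
    refine hΩ.setIntegral_partialDeriv_fst_eq_zero hb
      (G := fun r => ∑ k ∈ Λ0, c k * efun (k - ℓ) r)
      (fun x y => HasDerivAt.fun_sum fun k _ => (hasDerivAt_efun_fst _ x y).const_mul (c k))
      (by fun_prop) fun r hr => ?_
    -- `efun (k - ℓ) = efun k * efun (-ℓ)` factors `μ0` out of the sum
    simp only [sub_eq_add_neg, efun_add, ← mul_assoc, ← Finset.sum_mul, hμ r hr, zero_mul]
  have h2πI : (2 * π * I : ℂ) ≠ 0 := by simp [Real.pi_ne_zero, I_ne_zero]
  refine (mul_eq_zero.1 ?_).resolve_left (neg_ne_zero.2 h2πI)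
  rw [← hG, Finset.mul_sum, integral_finsetSum _ fun k _ =>
    ((continuous_efun _).integrableOn_of_isBounded hb).const_mul _ |>.const_mul _]
  refine Finset.sum_congr rfl fun k _ => ?_
  rw [integral_const_mul, integral_const_mul]
  push_cast [Prod.fst_sub]
  ring

theorem Bornology.IsBounded.preimage_swap {α β : Type*} [Bornology α] [Bornology β]
    {s : Set (α × β)} (hs : Bornology.IsBounded s) : Bornology.IsBounded (Prod.swap ⁻¹' s) := by
  rw [← image_swap_eq_preimage_swap]
  exact isBounded_image_fst_and_snd.1 (by simpa [image_image] using ⟨hs.image_snd, hs.image_fst⟩)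

theorem setIntegral_preimage_swap {E : Type*} [NormedAddCommGroup E] [NormedSpace ℝ E]
    (s : Set (ℝ × ℝ)) (f : ℝ × ℝ → E) :
    ∫ r in Prod.swap ⁻¹' s, f r.swap = ∫ r in s, f r := by
  rw [Measure.volume_eq_prod]
  exact Measure.measurePreserving_swap.setIntegral_preimage_emb
    MeasurableEquiv.prodComm.measurableEmbedding f s

theorem sum_mul_snd_mul_setIntegral_efun_eq_zero {Ω : Set (ℝ × ℝ)} (hΩ : IsOpen Ω)
    (hb : Bornology.IsBounded Ω) (Λ0 : Finset (ℤ × ℤ)) (c : ℤ × ℤ → ℂ) (ℓ : ℤ × ℤ)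
    (hμ : ∀ r ∈ frontier Ω, ∑ k ∈ Λ0, c k * efun k r = 0) :
    ∑ k ∈ Λ0, c k * ((ℓ - k).2 : ℂ) * ∫ r in Ω, efun (k - ℓ) r = 0 := by
  have hfr : frontier (Prod.swap ⁻¹' Ω) = Prod.swap ⁻¹' frontier Ω :=
    ((Homeomorph.prodComm ℝ ℝ).preimage_frontier Ω).symm
  have := sum_mul_fst_mul_setIntegral_efun_eq_zero (hΩ.preimage continuous_swap) hb.preimage_swap
    (Λ0.map (Equiv.prodComm ℤ ℤ).toEmbedding) (c ∘ Prod.swap) ℓ.swap fun r hr => by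
      rw [hfr] at hr
      simpa [Finset.sum_map, efun_swap] using hμ _ hr
  simpa only [Finset.sum_map, Equiv.coe_toEmbedding, Equiv.prodComm_apply, Function.comp_apply,
    Prod.swap_swap, ← Prod.swap_sub, efun_swap, setIntegral_preimage_swap, Prod.fst_sub,
    Prod.snd_sub, Prod.fst_swap] using this

theorem fourierCoeff2_sum_indicator {ι : Type*} [Fintype ι] (a : ι → ℂ) {Ω : ι → Set (ℝ × ℝ)}
    (hΩ : ∀ i, MeasurableSet (Ω i)) (hsq : ∀ i, Ω i ⊆ square) (m : ℤ × ℤ) :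
    fourierCoeff2 (fun r => ∑ i, (Ω i).indicator (fun _ => a i) r) m =
      ∑ i, a i * ∫ r in Ω i, efun (-m) r := by
  have hint : ∀ i, IntegrableOn ((Ω i).indicator fun r => a i * efun (-m) r) square :=
    fun i => ((by fun_prop : Continuous fun r => a i * efun (-m) r).continuousOn
      |>.integrableOn_compact isCompact_Icc).indicator (hΩ i)
  simp only [fourierCoeff2, Finset.sum_mul, ← indicator_mul_left]
  rw [integral_finsetSum _ fun i _ => hint i]
  refine Finset.sum_congr rfl fun i _ => ?_
  rw [setIntegral_indicator (hΩ i), inter_eq_right.2 (hsq i), integral_const_mul]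

theorem fourier_annihilation_general
    (N : ℕ) (a : Fin N → ℂ) (Ω : Fin N → Set (ℝ × ℝ))
    (hopen : ∀ i, IsOpen (Ω i)) (hbdd : ∀ i, Bornology.IsBounded (Ω i))
    (hsub : ∀ i, Ω i ⊆ Set.Ioo (0 : ℝ) 1 ×ˢ Set.Ioo (0 : ℝ) 1)
    (Λ0 : Finset (ℤ × ℤ))
    (c : ℤ × ℤ → ℂ)
    (f : ℝ × ℝ → ℂ) (hf : f = fun r => ∑ i, (Ω i).indicator (fun _ => a i) r)
    (hedge : (⋃ i, frontier (Ω i)) ⊆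
      {r ∈ square | (∑ k ∈ Λ0, c k * efun k r) = 0}) :
    ∀ (ℓ : ℤ × ℤ) (j : Fin 2),
      ∑ k ∈ Λ0, c k *
        (if j = 0 then ((ℓ - k).1 : ℂ) else ((ℓ - k).2 : ℂ)) *
        fourierCoeff2 f (ℓ - k) = 0 := by
  intro ℓ j
  have hsq : ∀ i, Ω i ⊆ square := fun i => (hsub i).trans <| by
    rw [square, Icc_prod_eq]
    exact prod_mono Ioo_subset_Icc_self Ioo_subset_Icc_self
  have hμ : ∀ i, ∀ r ∈ frontier (Ω i), ∑ k ∈ Λ0, c k * efun k r = 0 :=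
    fun i r hr => (hedge (mem_iUnion_of_mem i hr)).2
  have hcoeff : ∀ k, fourierCoeff2 f (ℓ - k) = ∑ i, a i * ∫ r in Ω i, efun (k - ℓ) r := by
    intro k
    rw [hf, fourierCoeff2_sum_indicator a (fun i => (hopen i).measurableSet) hsq, neg_sub]
  simp_rw [hcoeff, Finset.mul_sum, mul_left_comm _ (a _)]
  rw [Finset.sum_comm]
  refine Finset.sum_eq_zero fun i _ => ?_
  rw [← Finset.mul_sum]
  refine mul_eq_zero_of_right _ ?_
  fin_cases j
  · simpa using sum_mul_fst_mul_setIntegral_efun_eq_zero (hopen i) (hbdd i) Λ0 c ℓ (hμ i)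
  · simpa using sum_mul_snd_mul_setIntegral_efun_eq_zero (hopen i) (hbdd i) Λ0 c ℓ (hμ i)

/-- For a piecewise constant image `f = Σ aᵢ χ_{Ωᵢ}` whose edge set
`∪ᵢ ∂Ωᵢ` is contained in the zero set of the trigonometric polynomial
`μ0(r) = Σ_{k∈Λ0} c[k] e^{2πi k·r}`, the Fourier-domain annihilation relation
`Σ_{k∈Λ0} c[k]·(ℓ−k)ⱼ·f̂[ℓ−k] = 0` holds for every `ℓ ∈ ℤ²` and `j ∈ {1,2}`. -/
theorem fourier_annihilation
    (N : ℕ) (a : Fin N → ℂ) (Ω : Fin N → Set (ℝ × ℝ))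
    (hopen : ∀ i, IsOpen (Ω i)) (hbdd : ∀ i, Bornology.IsBounded (Ω i))
    (hsub : ∀ i, Ω i ⊆ Set.Ioo (0 : ℝ) 1 ×ˢ Set.Ioo (0 : ℝ) 1)
    (hdisj : Pairwise (fun i j => Disjoint (Ω i) (Ω j)))
    (hnull : ∀ i, volume (frontier (Ω i)) = 0)
    (Λ0 : Finset (ℤ × ℤ)) (hΛ0 : Λ0.Nonempty)
    (c : ℤ × ℤ → ℂ) (hcsupp : ∀ k ∉ Λ0, c k = 0) (hc : ∃ k ∈ Λ0, c k ≠ 0)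
    (f : ℝ × ℝ → ℂ) (hf : f = fun r => ∑ i, (Ω i).indicator (fun _ => a i) r)
    (hedge : (⋃ i, frontier (Ω i)) ⊆
      {r ∈ square | (∑ k ∈ Λ0, c k * efun k r) = 0}) :
    ∀ (ℓ : ℤ × ℤ) (j : Fin 2),
      ∑ k ∈ Λ0, c k *
        (if j = 0 then ((ℓ - k).1 : ℂ) else ((ℓ - k).2 : ℂ)) *
        fourierCoeff2 f (ℓ - k) = 0 :=
  fourier_annihilation_general N a Ω hopen hbdd hsub Λ0 c f hf hedge
end
end

section
/- For every nonempty Θ ⊆ Γ and every matrix X ∈ ℂ^{(2|Λ2|) × |Λ1|}, the constraint Q_Θ(X) = Q_Θ(T(f̂)) holds if and only if there exists ĝ : ℤ² → ℂ with ĝ[k] = f̂[k] for all k ∈ Θ with k ≠ (0,0) such that X = T(ĝ). In particular, the feasible set of the lifted nuclear norm problem (11) coincides with the set of structured matrices built from Fourier data agreeing with the observed samples, so problems (8) and (11) are equivalent. -/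
open scoped ComplexConjugate

noncomputable section

/-- `Γ = {ℓ − k : ℓ ∈ Λ2, k ∈ Λ1}`. -/
def gammaSet (Λ1 Λ2 : Finset (ℤ × ℤ)) : Finset (ℤ × ℤ) :=
  (Λ2 ×ˢ Λ1).image (fun p => p.1 - p.2)

/-- `n(k) = |ω_i(k)|`, the number of positions `(ℓ, k') ∈ Λ2 × Λ1` with `ℓ − k' = k`. -/
def nsize (Λ1 Λ2 : Finset (ℤ × ℤ)) (k : ℤ × ℤ) : ℕ :=
  ((Λ2 ×ˢ Λ1).filter (fun p => p.1 - p.2 = k)).card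

/-- The basis matrix `A_k`: for `k ≠ (0,0)` its block-`i` entry at each position of
`ω_i(k)` equals `kᵢ/(|k|·√n(k))`, with all other entries zero; `A_{(0,0)} = 0`. -/
def Amat (Λ1 Λ2 : Finset (ℤ × ℤ)) (k : ℤ × ℤ) : Matrix (Fin 2 × Λ2) Λ1 ℂ :=
  fun p k' =>
    if k ≠ 0 ∧ (p.2 : ℤ × ℤ) - (k' : ℤ × ℤ) = k then
      (((if p.1 = 0 then (k.1 : ℝ) else (k.2 : ℝ)) /
        (Real.sqrt ((k.1 : ℝ) ^ 2 + (k.2 : ℝ) ^ 2) *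
          Real.sqrt (nsize Λ1 Λ2 k)) : ℝ) : ℂ)
    else 0

/-- Frobenius inner product `⟨X, Y⟩ = trace(Yᴴ X)`. -/
def finner {Λ1 Λ2 : Finset (ℤ × ℤ)} (X Y : Matrix (Fin 2 × Λ2) Λ1 ℂ) : ℂ :=
  ∑ p : Fin 2 × Λ2, ∑ q : Λ1, conj (Y p q) * X p q

/-- `A_Θ(X) = Σ_{k∈Θ} ⟨X, A_k⟩ A_k`. -/
def Aproj (Λ1 Λ2 : Finset (ℤ × ℤ)) (Θ : Finset (ℤ × ℤ))
    (X : Matrix (Fin 2 × Λ2) Λ1 ℂ) : Matrix (Fin 2 × Λ2) Λ1 ℂ :=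
  ∑ k ∈ Θ, finner X (Amat Λ1 Λ2 k) • Amat Λ1 Λ2 k

/-- `A^⊥(X) = X − Σ_{k∈Γ} ⟨X, A_k⟩ A_k`. -/
def Aperp (Λ1 Λ2 : Finset (ℤ × ℤ)) (X : Matrix (Fin 2 × Λ2) Λ1 ℂ) :
    Matrix (Fin 2 × Λ2) Λ1 ℂ :=
  X - Aproj Λ1 Λ2 (gammaSet Λ1 Λ2) X

/-- `Q_Θ(X) = (|Γ|/|Θ|)·A_Θ(X) + A^⊥(X)`. -/
def Qop (Λ1 Λ2 : Finset (ℤ × ℤ)) (Θ : Finset (ℤ × ℤ))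
    (X : Matrix (Fin 2 × Λ2) Λ1 ℂ) : Matrix (Fin 2 × Λ2) Λ1 ℂ :=
  (((gammaSet Λ1 Λ2).card : ℂ) / (Θ.card : ℂ)) • Aproj Λ1 Λ2 Θ X + Aperp Λ1 Λ2 X

/-- The structured matrix `T(ĝ)` with entries `Tᵢ(ĝ)[ℓ,k] = (ℓ−k)ᵢ · ĝ[ℓ−k]`. -/
def Tmat (Λ1 Λ2 : Finset (ℤ × ℤ)) (g : ℤ × ℤ → ℂ) :
    Matrix (Fin 2 × Λ2) Λ1 ℂ := fun p k =>
  (if p.1 = 0 then (((p.2 : ℤ × ℤ) - (k : ℤ × ℤ)).1 : ℂ)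
    else (((p.2 : ℤ × ℤ) - (k : ℤ × ℤ)).2 : ℂ)) * g ((p.2 : ℤ × ℤ) - (k : ℤ × ℤ))

/-! With `w_k = |k|·√n(k)`, the matrix `A_k` is `T(δ_k)/w_k`, and `⟨T(ĝ), A_k⟩ = w_k·ĝ[k]`:
counting each difference `k ∈ Γ` with its multiplicity `n(k)` gives
`⟨T(ĝ), T(ĥ)⟩ = Σ_{k∈Γ} w_k² ĝ[k] conj(ĥ[k])`. Hence the `A_k`, `k ∈ Γ ∖ {0}`, form an
orthonormal basis of the range of `T`, and `A_Γ(Y) = T(k ↦ ⟨Y, A_k⟩/w_k)` is the orthogonal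
projection onto it, so that `A^⊥ ∘ T = 0`.

Pairing `Q_Θ(X) = Q_Θ(T(f̂))` with `A_k`, `k ∈ Θ`, gives `⟨X, A_k⟩ = ⟨T(f̂), A_k⟩`. Then
`A_Θ(X) = A_Θ(T(f̂))`, so `A^⊥(X) = A^⊥(T(f̂)) = 0` and `X = A_Γ(X)` lies in the range of `T`;
the data `ĝ = f̂ + (⟨X, A_k⟩ − ⟨T(f̂), A_k⟩)/w_k` agrees with `f̂` on `Θ` and `T(ĝ) = X`. -/

section

variable {Λ1 Λ2 : Finset (ℤ × ℤ)}

lemma sum_sum_sub_eq_sum_gammaSet {M : Type*} [AddCommMonoid M] (φ : ℤ × ℤ → M) :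
    ∑ ℓ : Λ2, ∑ q : Λ1, φ ((ℓ : ℤ × ℤ) - q) =
      ∑ k ∈ gammaSet Λ1 Λ2, nsize Λ1 Λ2 k • φ k := by
  have hinner (ℓ : ℤ × ℤ) : ∑ q : Λ1, φ (ℓ - q) = ∑ q ∈ Λ1, φ (ℓ - q) :=
    Finset.sum_coe_sort Λ1 fun q => φ (ℓ - q)
  simp only [hinner, Finset.sum_coe_sort Λ2 fun ℓ => ∑ q ∈ Λ1, φ (ℓ - q)]
  rw [← Finset.sum_product' Λ2 Λ1 fun ℓ q => φ (ℓ - q), Finset.sum_comp]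
  rfl

lemma sub_mem_gammaSet (ℓ : Λ2) (q : Λ1) : (ℓ : ℤ × ℤ) - q ∈ gammaSet Λ1 Λ2 :=
  Finset.mem_image.2 ⟨((ℓ : ℤ × ℤ), (q : ℤ × ℤ)), Finset.mem_product.2 ⟨ℓ.2, q.2⟩, rfl⟩

lemma nsize_eq_zero_of_notMem {k : ℤ × ℤ} (hk : k ∉ gammaSet Λ1 Λ2) :
    nsize Λ1 Λ2 k = 0 :=
  Finset.card_eq_zero.2 <| Finset.filter_eq_empty_iff.2 fun p hp hpk =>
    hk (Finset.mem_image.2 ⟨p, hp, hpk⟩)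

lemma nsize_pos {k : ℤ × ℤ} (hk : k ∈ gammaSet Λ1 Λ2) : 0 < nsize Λ1 Λ2 k := by
  obtain ⟨p, hp, rfl⟩ := Finset.mem_image.1 hk
  exact Finset.card_pos.2 ⟨p, Finset.mem_filter.2 ⟨hp, rfl⟩⟩

variable (Λ1 Λ2) in
def weight (k : ℤ × ℤ) : ℝ :=
  Real.sqrt ((k.1 : ℝ) ^ 2 + (k.2 : ℝ) ^ 2) * Real.sqrt (nsize Λ1 Λ2 k)

lemma weight_sq (k : ℤ × ℤ) :
    weight Λ1 Λ2 k ^ 2 = nsize Λ1 Λ2 k * ((k.1 : ℝ) ^ 2 + (k.2 : ℝ) ^ 2) := by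
  rw [weight, mul_pow, Real.sq_sqrt (by positivity), Real.sq_sqrt (by positivity), mul_comm]

lemma weight_eq_zero_of_notMem {k : ℤ × ℤ} (hk : k ∉ gammaSet Λ1 Λ2) :
    weight Λ1 Λ2 k = 0 := by
  simp [weight, nsize_eq_zero_of_notMem hk]

lemma weight_ne_zero {k : ℤ × ℤ} (hk : k ∈ gammaSet Λ1 Λ2) (h0 : k ≠ 0) :
    weight Λ1 Λ2 k ≠ 0 := by
  have hsq : 0 < (k.1 : ℝ) ^ 2 + (k.2 : ℝ) ^ 2 := by
    obtain h | h : k.1 ≠ 0 ∨ k.2 ≠ 0 := not_and_or.1 fun h => h0 (Prod.ext h.1 h.2)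
    · have : (k.1 : ℝ) ≠ 0 := by exact_mod_cast h
      positivity
    · have : (k.2 : ℝ) ≠ 0 := by exact_mod_cast h
      positivity
  exact mul_ne_zero (Real.sqrt_ne_zero'.2 hsq)
    (Real.sqrt_ne_zero'.2 (Nat.cast_pos.2 (nsize_pos hk)))

lemma Tmat_congr {g g' : ℤ × ℤ → ℂ} (h : ∀ k ∈ gammaSet Λ1 Λ2, k ≠ 0 → g k = g' k) :
    Tmat Λ1 Λ2 g = Tmat Λ1 Λ2 g' := by
  ext ⟨i, ℓ⟩ q
  by_cases h0 : (ℓ : ℤ × ℤ) - q = 0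
  · simp [Tmat, h0]
  · simp [Tmat, h _ (sub_mem_gammaSet ℓ q) h0]

variable (Λ1 Λ2) in
def TmatLinearMap : (ℤ × ℤ → ℂ) →ₗ[ℂ] Matrix (Fin 2 × Λ2) Λ1 ℂ where
  toFun := Tmat Λ1 Λ2
  map_add' g h := by
    ext
    simp only [Tmat, Pi.add_apply, Matrix.add_apply]
    ring
  map_smul' c g := by
    ext
    simp only [Tmat, Pi.smul_apply, Matrix.smul_apply, smul_eq_mul, RingHom.id_apply]
    ring

lemma Tmat_add (g h : ℤ × ℤ → ℂ) : Tmat Λ1 Λ2 (g + h) = Tmat Λ1 Λ2 g + Tmat Λ1 Λ2 h :=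
  map_add (TmatLinearMap Λ1 Λ2) g h

lemma Tmat_sub (g h : ℤ × ℤ → ℂ) : Tmat Λ1 Λ2 (g - h) = Tmat Λ1 Λ2 g - Tmat Λ1 Λ2 h :=
  map_sub (TmatLinearMap Λ1 Λ2) g h

lemma Amat_eq_Tmat_single (k : ℤ × ℤ) :
    Amat Λ1 Λ2 k = Tmat Λ1 Λ2 (Pi.single k (weight Λ1 Λ2 k : ℂ)⁻¹) := by
  ext ⟨i, ℓ⟩ q
  by_cases hd : (ℓ : ℤ × ℤ) - q = k
  · subst hd
    by_cases h0 : (ℓ : ℤ × ℤ) - q = 0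
    · simp [Amat, Tmat, h0]
    · simp only [Amat, Tmat, weight, ne_eq, h0, not_false_eq_true, and_self, if_true,
        Pi.single_eq_same]
      split_ifs <;> push_cast <;> ring
  · simp [Amat, Tmat, hd]

lemma Amat_eq_zero_of_weight_eq_zero {k : ℤ × ℤ} (hk : weight Λ1 Λ2 k = 0) :
    Amat Λ1 Λ2 k = 0 := by
  rw [Amat_eq_Tmat_single, hk, Complex.ofReal_zero, inv_zero, Pi.single_zero]
  exact map_zero (TmatLinearMap Λ1 Λ2)

lemma finner_add_left (X X' Y : Matrix (Fin 2 × Λ2) Λ1 ℂ) :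
    finner (X + X') Y = finner X Y + finner X' Y := by
  simp only [finner, Matrix.add_apply, mul_add, Finset.sum_add_distrib]

lemma finner_sub_left (X X' Y : Matrix (Fin 2 × Λ2) Λ1 ℂ) :
    finner (X - X') Y = finner X Y - finner X' Y := by
  simp only [finner, Matrix.sub_apply, mul_sub, Finset.sum_sub_distrib]

lemma finner_smul_left (c : ℂ) (X Y : Matrix (Fin 2 × Λ2) Λ1 ℂ) :
    finner (c • X) Y = c * finner X Y := by
  simp only [finner, Matrix.smul_apply, smul_eq_mul, Finset.mul_sum, mul_left_comm]

lemma finner_zero_right (X : Matrix (Fin 2 × Λ2) Λ1 ℂ) : finner X 0 = 0 := by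
  simp [finner]

lemma finner_Tmat_Tmat (g h : ℤ × ℤ → ℂ) :
    finner (Tmat Λ1 Λ2 g) (Tmat Λ1 Λ2 h) =
      ∑ k ∈ gammaSet Λ1 Λ2, (weight Λ1 Λ2 k : ℂ) ^ 2 * (conj (h k) * g k) := by
  let φ : ℤ × ℤ → ℂ := fun k => ((k.1 : ℂ) ^ 2 + (k.2 : ℂ) ^ 2) * (conj (h k) * g k)
  calc finner (Tmat Λ1 Λ2 g) (Tmat Λ1 Λ2 h) = ∑ ℓ : Λ2, ∑ q : Λ1, φ ((ℓ : ℤ × ℤ) - q) := by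
        simp only [finner, Fintype.sum_prod_type, Fin.sum_univ_two, ← Finset.sum_add_distrib]
        refine Finset.sum_congr rfl fun ℓ _ => Finset.sum_congr rfl fun q _ => ?_
        simp only [Tmat, φ, map_mul, map_intCast, Fin.isValue, if_true, one_ne_zero, if_false]
        ring
    _ = ∑ k ∈ gammaSet Λ1 Λ2, nsize Λ1 Λ2 k • φ k := sum_sum_sub_eq_sum_gammaSet φ
    _ = _ := by
        refine Finset.sum_congr rfl fun k _ => ?_
        have hw : (weight Λ1 Λ2 k : ℂ) ^ 2 =
            nsize Λ1 Λ2 k * ((k.1 : ℂ) ^ 2 + (k.2 : ℂ) ^ 2) := by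
          exact_mod_cast congrArg Complex.ofReal (weight_sq (Λ1 := Λ1) (Λ2 := Λ2) k)
        rw [hw, nsmul_eq_mul]
        ring

lemma finner_Tmat_Amat (g : ℤ × ℤ → ℂ) (k : ℤ × ℤ) :
    finner (Tmat Λ1 Λ2 g) (Amat Λ1 Λ2 k) = g k * weight Λ1 Λ2 k := by
  rw [Amat_eq_Tmat_single, finner_Tmat_Tmat]
  simp only [Pi.single_apply, apply_ite conj, map_zero, ite_mul, zero_mul, mul_ite, mul_zero,
    Finset.sum_ite_eq']
  split_ifs with hk
  · rw [map_inv₀, Complex.conj_ofReal, ← mul_assoc, sq, mul_self_mul_inv, mul_comm]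
  · simp [weight_eq_zero_of_notMem hk]

variable (Λ1 Λ2) in
def coeffs (Y : Matrix (Fin 2 × Λ2) Λ1 ℂ) (k : ℤ × ℤ) : ℂ :=
  finner Y (Amat Λ1 Λ2 k) / weight Λ1 Λ2 k

lemma Aproj_eq_Tmat (S : Finset (ℤ × ℤ)) (Y : Matrix (Fin 2 × Λ2) Λ1 ℂ) :
    Aproj Λ1 Λ2 S Y = Tmat Λ1 Λ2 (fun k => if k ∈ S then coeffs Λ1 Λ2 Y k else 0) := by
  have hterm (k : ℤ × ℤ) : finner Y (Amat Λ1 Λ2 k) • Amat Λ1 Λ2 k =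
      TmatLinearMap Λ1 Λ2 (Pi.single k (coeffs Λ1 Λ2 Y k)) := by
    rw [coeffs]
    generalize finner Y (Amat Λ1 Λ2 k) = c
    rw [Amat_eq_Tmat_single, div_eq_mul_inv, ← smul_eq_mul, Pi.single_smul', map_smul]
    rfl
  rw [Aproj, Finset.sum_congr rfl fun k _ => hterm k, ← map_sum]
  refine congrArg (Tmat Λ1 Λ2) (funext fun j => ?_)
  rw [Finset.sum_apply, Finset.sum_pi_single]

lemma Aproj_gammaSet_eq_Tmat (Y : Matrix (Fin 2 × Λ2) Λ1 ℂ) :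
    Aproj Λ1 Λ2 (gammaSet Λ1 Λ2) Y = Tmat Λ1 Λ2 (coeffs Λ1 Λ2 Y) := by
  rw [Aproj_eq_Tmat]
  exact Tmat_congr fun k hk _ => if_pos hk

lemma Aproj_congr {S : Finset (ℤ × ℤ)} {X X' : Matrix (Fin 2 × Λ2) Λ1 ℂ}
    (h : ∀ k ∈ S, finner X (Amat Λ1 Λ2 k) = finner X' (Amat Λ1 Λ2 k)) :
    Aproj Λ1 Λ2 S X = Aproj Λ1 Λ2 S X' :=
  Finset.sum_congr rfl fun k hk => by rw [h k hk]

lemma finner_Aproj_Amat {S : Finset (ℤ × ℤ)} (Y : Matrix (Fin 2 × Λ2) Λ1 ℂ) {k : ℤ × ℤ}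
    (hk : k ∈ S) : finner (Aproj Λ1 Λ2 S Y) (Amat Λ1 Λ2 k) = finner Y (Amat Λ1 Λ2 k) := by
  rw [Aproj_eq_Tmat, finner_Tmat_Amat, if_pos hk, coeffs]
  refine div_mul_cancel_of_imp fun hw => ?_
  rw [Amat_eq_zero_of_weight_eq_zero (by exact_mod_cast hw), finner_zero_right]

lemma Aperp_Tmat (g : ℤ × ℤ → ℂ) : Aperp Λ1 Λ2 (Tmat Λ1 Λ2 g) = 0 := by
  rw [Aperp, Aproj_gammaSet_eq_Tmat, sub_eq_zero]
  refine Tmat_congr fun k hk h0 => ?_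
  rw [coeffs, finner_Tmat_Amat,
    mul_div_cancel_right₀ _ (by exact_mod_cast weight_ne_zero hk h0)]

lemma finner_Aperp_Amat (Y : Matrix (Fin 2 × Λ2) Λ1 ℂ) (k : ℤ × ℤ) :
    finner (Aperp Λ1 Λ2 Y) (Amat Λ1 Λ2 k) = 0 := by
  by_cases hk : k ∈ gammaSet Λ1 Λ2
  · rw [Aperp, finner_sub_left, finner_Aproj_Amat Y hk, sub_self]
  · rw [Amat_eq_zero_of_weight_eq_zero (weight_eq_zero_of_notMem hk), finner_zero_right]

lemma finner_Qop_Amat {Θ : Finset (ℤ × ℤ)} (Y : Matrix (Fin 2 × Λ2) Λ1 ℂ) {k : ℤ × ℤ}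
    (hk : k ∈ Θ) :
    finner (Qop Λ1 Λ2 Θ Y) (Amat Λ1 Λ2 k) =
      ((gammaSet Λ1 Λ2).card / Θ.card : ℂ) * finner Y (Amat Λ1 Λ2 k) := by
  rw [Qop, finner_add_left, finner_smul_left, finner_Aproj_Amat Y hk, finner_Aperp_Amat,
    add_zero]

lemma finner_Amat_eq_of_Qop_eq {Θ : Finset (ℤ × ℤ)} {X X' : Matrix (Fin 2 × Λ2) Λ1 ℂ}
    (h : Qop Λ1 Λ2 Θ X = Qop Λ1 Λ2 Θ X') {k : ℤ × ℤ} (hk : k ∈ Θ) :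
    finner X (Amat Λ1 Λ2 k) = finner X' (Amat Λ1 Λ2 k) := by
  have hQ := congrArg (finner · (Amat Λ1 Λ2 k)) h
  simp only [finner_Qop_Amat _ hk] at hQ
  by_cases hkΓ : k ∈ gammaSet Λ1 Λ2
  · refine mul_left_cancel₀ (div_ne_zero ?_ ?_) hQ <;>
      exact Nat.cast_ne_zero.2 (Finset.card_ne_zero_of_mem ‹_›)
  · rw [Amat_eq_zero_of_weight_eq_zero (weight_eq_zero_of_notMem hkΓ), finner_zero_right,
      finner_zero_right]

lemma Aperp_eq_zero_of_Qop_eq_Qop_Tmat {Θ : Finset (ℤ × ℤ)}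
    {X : Matrix (Fin 2 × Λ2) Λ1 ℂ} {f : ℤ × ℤ → ℂ}
    (h : Qop Λ1 Λ2 Θ X = Qop Λ1 Λ2 Θ (Tmat Λ1 Λ2 f)) : Aperp Λ1 Λ2 X = 0 := by
  rw [Qop, Qop, Aproj_congr fun k hk => finner_Amat_eq_of_Qop_eq h hk, Aperp_Tmat,
    add_zero] at h
  exact add_eq_left.1 h

end

theorem Qop_constraint_iff_general
    (Λ1 Λ2 : Finset (ℤ × ℤ))
    (fhat : ℤ × ℤ → ℂ)
    (Θ : Finset (ℤ × ℤ))
    (X : Matrix (Fin 2 × Λ2) Λ1 ℂ) :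
    Qop Λ1 Λ2 Θ X = Qop Λ1 Λ2 Θ (Tmat Λ1 Λ2 fhat) ↔
      ∃ g : ℤ × ℤ → ℂ, (∀ k ∈ Θ, k ≠ 0 → g k = fhat k) ∧ X = Tmat Λ1 Λ2 g := by
  constructor
  · intro h
    have hX : X = Aproj Λ1 Λ2 (gammaSet Λ1 Λ2) X :=
      sub_eq_zero.1 (Aperp_eq_zero_of_Qop_eq_Qop_Tmat h)
    have hT : Tmat Λ1 Λ2 fhat = Aproj Λ1 Λ2 (gammaSet Λ1 Λ2) (Tmat Λ1 Λ2 fhat) :=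
      sub_eq_zero.1 (Aperp_Tmat fhat)
    refine ⟨fhat + coeffs Λ1 Λ2 X - coeffs Λ1 Λ2 (Tmat Λ1 Λ2 fhat), fun k hk _ => ?_, ?_⟩
    · simp [coeffs, finner_Amat_eq_of_Qop_eq h hk]
    · rw [Tmat_sub, Tmat_add, ← Aproj_gammaSet_eq_Tmat, ← Aproj_gammaSet_eq_Tmat, ← hX, ← hT]
      abel
  · rintro ⟨g, hg, rfl⟩
    rw [Qop, Qop, Aperp_Tmat, Aperp_Tmat, Aproj_congr fun k hk => ?_]
    rw [finner_Tmat_Amat, finner_Tmat_Amat]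
    rcases eq_or_ne k 0 with rfl | h0
    · simp [weight]
    · rw [hg k hk h0]

/-- For nonempty `Θ ⊆ Γ`, the constraint `Q_Θ(X) = Q_Θ(T(f̂))` holds
iff `X = T(ĝ)` for some Fourier data `ĝ` agreeing with `f̂` on `Θ \ {(0,0)}`; hence the
lifted problem (11) is equivalent to the original problem (8). -/
theorem Qop_constraint_iff
    (Λ1 Λ2 : Finset (ℤ × ℤ)) (hΛ1 : Λ1.Nonempty) (hΛ2 : Λ2.Nonempty)
    (fhat : ℤ × ℤ → ℂ)
    (Θ : Finset (ℤ × ℤ)) (hΘne : Θ.Nonempty) (hΘΓ : Θ ⊆ gammaSet Λ1 Λ2)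
    (X : Matrix (Fin 2 × Λ2) Λ1 ℂ) :
    Qop Λ1 Λ2 Θ X = Qop Λ1 Λ2 Θ (Tmat Λ1 Λ2 fhat) ↔
      ∃ g : ℤ × ℤ → ℂ, (∀ k ∈ Θ, k ≠ 0 → g k = fhat k) ∧ X = Tmat Λ1 Λ2 g :=
  Qop_constraint_iff_general Λ1 Λ2 fhat Θ X
end
end
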